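/- Let (X,d) be a compact metric space and let (X, f_{1,∞}) be a non-autonomous discrete system such that f_{1,∞} is feeble open, each f_n is surjective, (f_n) converges uniformly to a continuous map f : X → X, and the compositions (f_r^k) converge collectively to (f^k). Then f_{1,∞} is totally transitive if and only if f is totally transitive. -/

import Mathlib

open Set Filter

/-- `nds f i n` is the `n`-step composition `f_i^n = f (i+n-1) ∘ ⋯ ∘ f i`, with `nds f i 0 = id`. -/
def nds {X : Type*} (f : ℕ → X → X) (i : ℕ) : ℕ → X → X
  | 0 => id
  | n + 1 => f (i + n) ∘ nds f i n

section TopDefs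

variable {X : Type*} [TopologicalSpace X]

/-- The NDS `f_{1,∞}` is (topologically) transitive. -/
def NDSTransitive (f : ℕ → X → X) : Prop :=
  ∀ U V : Set X, IsOpen U → U.Nonempty → IsOpen V → V.Nonempty →
    ∃ n : ℕ, 0 < n ∧ (nds f 1 n '' U ∩ V).Nonempty

/-- The NDS `f_{1,∞}` is mixing. -/
def NDSMixing (f : ℕ → X → X) : Prop :=
  ∀ U V : Set X, IsOpen U → U.Nonempty → IsOpen V → V.Nonempty →
    ∃ N : ℕ, ∀ n : ℕ, N ≤ n → (nds f 1 n '' U ∩ V).Nonempty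

/-- The NDS `f_{1,∞}` is weakly mixing. -/
def NDSWeaklyMixing (f : ℕ → X → X) : Prop :=
  ∀ U₁ U₂ V₁ V₂ : Set X, IsOpen U₁ → U₁.Nonempty → IsOpen U₂ → U₂.Nonempty →
    IsOpen V₁ → V₁.Nonempty → IsOpen V₂ → V₂.Nonempty →
    ∃ n : ℕ, 0 < n ∧ (nds f 1 n '' U₁ ∩ V₁).Nonempty ∧ (nds f 1 n '' U₂ ∩ V₂).Nonempty

/-- The NDS `f_{1,∞}` is multi-transitive. -/
def NDSMultiTransitive (f : ℕ → X → X) : Prop :=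
  ∀ m : ℕ, 0 < m → ∀ U V : Fin m → Set X,
    (∀ j, IsOpen (U j)) → (∀ j, (U j).Nonempty) →
    (∀ j, IsOpen (V j)) → (∀ j, (V j).Nonempty) →
    ∃ l : ℕ, 0 < l ∧ ∀ j : Fin m, (nds f 1 (l * (j.1 + 1)) '' U j ∩ V j).Nonempty

/-- The NDS `f_{1,∞}` is totally transitive. -/
def NDSTotallyTransitive (f : ℕ → X → X) : Prop :=
  ∀ k : ℕ, 0 < k → ∀ U V : Set X, IsOpen U → U.Nonempty → IsOpen V → V.Nonempty →
    ∃ n : ℕ, 0 < n ∧ (nds f 1 (n * k) '' U ∩ V).Nonempty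

/-- The NDS `f_{1,∞}` is minimal: every orbit is dense. -/
def NDSMinimal (f : ℕ → X → X) : Prop :=
  ∀ x : X, Dense (Set.range fun n : ℕ => nds f 1 n x)

/-- The NDS `f_{1,∞}` is feeble open. -/
def FeebleOpen (f : ℕ → X → X) : Prop :=
  ∀ i : ℕ, 1 ≤ i → ∀ U : Set X, IsOpen U → U.Nonempty → (interior (f i '' U)).Nonempty

/-- A set of positive integers is syndetic (has bounded gaps). -/
def SyndeticSet (A : Set ℕ) : Prop :=
  ∃ M : ℕ, ∀ i : ℕ, 1 ≤ i → ∃ j ∈ A, i ≤ j ∧ j ≤ i + M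

/-- A set of positive integers is thick (contains arbitrarily long runs). -/
def ThickSet (A : Set ℕ) : Prop :=
  ∀ p : ℕ, ∃ n : ℕ, ∀ j : ℕ, n ≤ j → j ≤ n + p → j ∈ A

/-- The NDS `f_{1,∞}` is syndetically transitive. -/
def NDSSyndeticallyTransitive (f : ℕ → X → X) : Prop :=
  ∀ U V : Set X, IsOpen U → U.Nonempty → IsOpen V → V.Nonempty →
    SyndeticSet {n : ℕ | 0 < n ∧ (nds f 1 n '' U ∩ V).Nonempty}

/-- The NDS `f_{1,∞}` has dense periodic points. -/
def NDSDensePeriodicPoints (f : ℕ → X → X) : Prop :=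
  Dense {x : X | ∃ k : ℕ, 0 < k ∧ ∀ n : ℕ, 0 < n → nds f 1 (k * n) x = x}

/-- The NDS `f_{k,∞}` is strongly transitive. -/
def NDSStronglyTransitiveFrom (f : ℕ → X → X) (k : ℕ) : Prop :=
  ∀ U : Set X, IsOpen U → U.Nonempty →
    ∃ M : ℕ, 0 < M ∧ (⋃ i ∈ Set.Icc 1 M, nds f k i '' U) = Set.univ

/-- An autonomous map is transitive. -/
def MapTransitive {Y : Type*} [TopologicalSpace Y] (g : Y → Y) : Prop :=
  ∀ U V : Set Y, IsOpen U → U.Nonempty → IsOpen V → V.Nonempty →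
    ∃ n : ℕ, 0 < n ∧ (g^[n] '' U ∩ V).Nonempty

/-- An autonomous map is weakly mixing. -/
def MapWeaklyMixing {Y : Type*} [TopologicalSpace Y] (g : Y → Y) : Prop :=
  ∀ U₁ U₂ V₁ V₂ : Set Y, IsOpen U₁ → U₁.Nonempty → IsOpen U₂ → U₂.Nonempty →
    IsOpen V₁ → V₁.Nonempty → IsOpen V₂ → V₂.Nonempty →
    ∃ n : ℕ, 0 < n ∧ (g^[n] '' U₁ ∩ V₁).Nonempty ∧ (g^[n] '' U₂ ∩ V₂).Nonempty

/-- An autonomous map is totally transitive. -/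
def MapTotallyTransitive {Y : Type*} [TopologicalSpace Y] (g : Y → Y) : Prop :=
  ∀ k : ℕ, 0 < k → ∀ U V : Set Y, IsOpen U → U.Nonempty → IsOpen V → V.Nonempty →
    ∃ n : ℕ, 0 < n ∧ (g^[n * k] '' U ∩ V).Nonempty

/-- An autonomous map is syndetically transitive. -/
def MapSyndeticallyTransitive {Y : Type*} [TopologicalSpace Y] (g : Y → Y) : Prop :=
  ∀ U V : Set Y, IsOpen U → U.Nonempty → IsOpen V → V.Nonempty →
    SyndeticSet {n : ℕ | 0 < n ∧ (g^[n] '' U ∩ V).Nonempty}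

/-- An autonomous map is minimal. -/
def MapMinimal {Y : Type*} [TopologicalSpace Y] (g : Y → Y) : Prop :=
  ∀ x : Y, Dense (Set.range fun n : ℕ => g^[n] x)

end TopDefs

section MetricDefs

variable {X : Type*} [MetricSpace X]

/-- The compositions `(f_r^k)` converge collectively to `(f^k)` (w.r.t. the supremum metric). -/
def CollectivelyConverges (f : ℕ → X → X) (g : X → X) : Prop :=
  ∀ ε : ℝ, 0 < ε → ∃ r₀ : ℕ, ∀ r : ℕ, r₀ ≤ r → ∀ k : ℕ, 1 ≤ k → ∀ x : X,
    dist (nds f r k x) (g^[k] x) < ε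

/-- `N(U, δ)`: the times at which the NDS is `δ`-sensitive on `U`. -/
def SensSet (f : ℕ → X → X) (U : Set X) (δ : ℝ) : Set ℕ :=
  {n : ℕ | 0 < n ∧ ∃ x ∈ U, ∃ y ∈ U, δ < dist (nds f 1 n x) (nds f 1 n y)}

/-- The NDS `f_{1,∞}` is multi-sensitive. -/
def NDSMultiSensitive (f : ℕ → X → X) : Prop :=
  ∃ δ : ℝ, 0 < δ ∧ ∀ m : ℕ, 0 < m → ∀ U : Fin m → Set X,
    (∀ i, IsOpen (U i)) → (∀ i, (U i).Nonempty) → (⋂ i, SensSet f (U i) δ).Nonempty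

/-- The NDS `f_{1,∞}` is thickly sensitive. -/
def NDSThicklySensitive (f : ℕ → X → X) : Prop :=
  ∃ δ : ℝ, 0 < δ ∧ ∀ U : Set X, IsOpen U → U.Nonempty → ThickSet (SensSet f U δ)

/-- The NDS `f_{1,∞}` is syndetically sensitive. -/
def NDSSyndeticallySensitive (f : ℕ → X → X) : Prop :=
  ∃ δ : ℝ, 0 < δ ∧ ∀ U : Set X, IsOpen U → U.Nonempty → SyndeticSet (SensSet f U δ)

/-- The NDS `f_{1,∞}` is mildly mixing: its product with every transitive NDS on a compact
metric space is transitive. -/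
def NDSMildlyMixing (f : ℕ → X → X) : Prop :=
  ∀ (Y : Type*) [MetricSpace Y] [CompactSpace Y] (g : ℕ → Y → Y),
    (∀ n : ℕ, 1 ≤ n → Continuous (g n)) → NDSTransitive g →
    NDSTransitive (fun n (p : X × Y) => (f n p.1, g n p.2))

/-- The NDS `f_{1,∞}` is Li–Yorke chaotic. -/
def LiYorkeChaotic (f : ℕ → X → X) : Prop :=
  ∃ S : Set X, ¬S.Countable ∧ ∀ x ∈ S, ∀ y ∈ S, x ≠ y →
    Filter.liminf (fun n : ℕ => dist (nds f 1 n x) (nds f 1 n y)) Filter.atTop = 0 ∧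
    0 < Filter.limsup (fun n : ℕ => dist (nds f 1 n x) (nds f 1 n y)) Filter.atTop

end MetricDefs

/-!
Collective convergence gives `r₀` such that every tail `f_r^j` with `r ≥ r₀` is uniformly
`ε`-close to `F^j`. With `M = r₀ k`, the NDS at time `M + nk` is `f_{1+M}^{nk} ∘ f_1^M`, which
therefore shadows `F^{nk} ∘ f_1^M`. Open sets are moved across `f_1^M` by preimages (continuity
and surjectivity) in one direction and by images (feeble openness) in the other. NDS times `nk`
beyond `M` are obtained from total transitivity with the period `k (r₀ + 1)`.
-/

section Nds

variable {X : Type*}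

theorem nds_add (f : ℕ → X → X) (i a b : ℕ) :
    nds f i (a + b) = nds f (i + a) b ∘ nds f i a := by
  induction b with
  | zero => rfl
  | succ b ih =>
    rw [← Nat.add_assoc, nds, ih, nds, Nat.add_assoc i a b]
    rfl

theorem continuous_nds [TopologicalSpace X] {f : ℕ → X → X}
    (hcont : ∀ n : ℕ, 1 ≤ n → Continuous (f n)) {i : ℕ} (hi : 1 ≤ i) :
    ∀ n, Continuous (nds f i n)
  | 0 => continuous_id
  | n + 1 => (hcont (i + n) (by omega)).comp (continuous_nds hcont hi n)

theorem surjective_nds {f : ℕ → X → X}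
    (hsurj : ∀ n : ℕ, 1 ≤ n → Function.Surjective (f n)) {i : ℕ} (hi : 1 ≤ i) :
    ∀ n, Function.Surjective (nds f i n)
  | 0 => Function.surjective_id
  | n + 1 => (hsurj (i + n) (by omega)).comp (surjective_nds hsurj hi n)

theorem FeebleOpen.exists_isOpen_subset_image_nds [TopologicalSpace X] {f : ℕ → X → X}
    (hfo : FeebleOpen f) {i : ℕ} (hi : 1 ≤ i) {U : Set X} (hU : IsOpen U) (hUne : U.Nonempty) :
    ∀ n, ∃ W : Set X, IsOpen W ∧ W.Nonempty ∧ W ⊆ nds f i n '' U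
  | 0 => ⟨U, hU, hUne, by simp [nds]⟩
  | n + 1 => by
    obtain ⟨W, hW, hWne, hWsub⟩ := hfo.exists_isOpen_subset_image_nds hi hU hUne n
    refine ⟨interior (f (i + n) '' W), isOpen_interior, hfo (i + n) (by omega) W hW hWne, ?_⟩
    calc interior (f (i + n) '' W) ⊆ f (i + n) '' (nds f i n '' U) :=
          interior_subset.trans (image_mono hWsub)
      _ = nds f i (n + 1) '' U := (image_comp _ _ _).symm

end Nds

theorem exists_pos_add_mul_of_forall_pos_mul {P : ℕ → Prop}
    (h : ∀ k, 0 < k → ∃ n, 0 < n ∧ P (n * k)) (N : ℕ) {k : ℕ} (hk : 0 < k) :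
    ∃ n, 0 < n ∧ P ((N + n) * k) := by
  obtain ⟨n, hn, hP⟩ := h (k * (N + 1)) (by positivity)
  have hN : N + 1 ≤ n * (N + 1) := Nat.le_mul_of_pos_left _ hn
  refine ⟨n * (N + 1) - N, by omega, ?_⟩
  rwa [Nat.add_sub_cancel' (by omega), Nat.mul_assoc, Nat.mul_comm (N + 1)]

theorem NDSTotallyTransitive.exists_pos_add_mul {X : Type*} [TopologicalSpace X]
    {f : ℕ → X → X} (hf : NDSTotallyTransitive f) (N : ℕ) {k : ℕ} (hk : 0 < k)
    {U V : Set X} (hU : IsOpen U) (hUne : U.Nonempty) (hV : IsOpen V) (hVne : V.Nonempty) :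
    ∃ n, 0 < n ∧ (nds f 1 ((N + n) * k) '' U ∩ V).Nonempty :=
  exists_pos_add_mul_of_forall_pos_mul (P := fun t ↦ (nds f 1 t '' U ∩ V).Nonempty)
    (fun k hk ↦ hf k hk U V hU hUne hV hVne) N hk

theorem CollectivelyConverges.exists_dist_nds_iterate_lt {X : Type*} [MetricSpace X]
    {f : ℕ → X → X} {F : X → X} (hcoll : CollectivelyConverges f F) {ε : ℝ}
    (hε : 0 < ε) :
    ∃ m : ℕ, ∀ k n : ℕ, 0 < k → 0 < n → ∀ x : X,
      dist (nds f 1 ((m + n) * k) x) (F^[n * k] (nds f 1 (m * k) x)) < ε := by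
  obtain ⟨m, hm⟩ := hcoll ε hε
  refine ⟨m, fun k n hk hn x ↦ ?_⟩
  have hm_le : m ≤ m * k := Nat.le_mul_of_pos_right m hk
  rw [Nat.add_mul, nds_add]
  exact hm (1 + m * k) (by omega) (n * k) (Nat.mul_pos hn hk) _

theorem totallyTransitive_iff_limit_totallyTransitive_general {X : Type*} [MetricSpace X]
    (f : ℕ → X → X) (F : X → X)
    (hcont : ∀ n : ℕ, 1 ≤ n → Continuous (f n))
    (hfo : FeebleOpen f)
    (hsurj : ∀ n : ℕ, 1 ≤ n → Function.Surjective (f n))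
    (hcoll : CollectivelyConverges f F) :
    NDSTotallyTransitive f ↔ MapTotallyTransitive F := by
  constructor
  · intro hf k hk U V hU hUne hV ⟨v, hv⟩
    obtain ⟨ε, hε, hball⟩ := Metric.isOpen_iff.mp hV v hv
    obtain ⟨m, hm⟩ := hcoll.exists_dist_nds_iterate_lt (half_pos hε)
    obtain ⟨n, hn, _, ⟨u, hu, rfl⟩, huv⟩ :=
      hf.exists_pos_add_mul m hk (V := Metric.ball v (ε / 2))
      (hU.preimage (continuous_nds hcont le_rfl (m * k)))
      (hUne.preimage (surjective_nds hsurj le_rfl (m * k)))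
      Metric.isOpen_ball (Metric.nonempty_ball.mpr (half_pos hε))
    refine ⟨n, hn, _, mem_image_of_mem _ hu, hball ?_⟩
    rw [Metric.mem_ball] at huv ⊢
    linarith [dist_triangle_left (F^[n * k] (nds f 1 (m * k) u)) v
      (nds f 1 ((m + n) * k) u), hm k n hk hn u]
  · intro hF k hk U V hU hUne hV ⟨v, hv⟩
    obtain ⟨ε, hε, hball⟩ := Metric.isOpen_iff.mp hV v hv
    obtain ⟨m, hm⟩ := hcoll.exists_dist_nds_iterate_lt (half_pos hε)
    obtain ⟨W, hW, hWne, hWU⟩ := hfo.exists_isOpen_subset_image_nds le_rfl hU hUne (m * k)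
    obtain ⟨n, hn, _, ⟨w, hw, rfl⟩, hwv⟩ := hF k hk W (Metric.ball v (ε / 2)) hW hWne
      Metric.isOpen_ball (Metric.nonempty_ball.mpr (half_pos hε))
    obtain ⟨u, hu, rfl⟩ := hWU hw
    refine ⟨m + n, by omega, _, mem_image_of_mem _ hu, hball ?_⟩
    rw [Metric.mem_ball] at hwv ⊢
    linarith [dist_triangle (nds f 1 ((m + n) * k) u) (F^[n * k] (nds f 1 (m * k) u)) v,
      hm k n hk hn u]

theorem totallyTransitive_iff_limit_totallyTransitive {X : Type*} [MetricSpace X]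
    [CompactSpace X]
    (f : ℕ → X → X) (F : X → X)
    (hcont : ∀ n : ℕ, 1 ≤ n → Continuous (f n))
    (hfo : FeebleOpen f)
    (hsurj : ∀ n : ℕ, 1 ≤ n → Function.Surjective (f n))
    (hF : Continuous F)
    (hunif : TendstoUniformly (fun n x => f n x) F Filter.atTop)
    (hcoll : CollectivelyConverges f F) :
    NDSTotallyTransitive f ↔ MapTotallyTransitive F :=
  totallyTransitive_iff_limit_totallyTransitive_general f F hcont hfo hsurj hcoll
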